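/- Let U ∈ ℂ^g, n, m ∈ ℤ^g, λ = n + Bm, and let l : ℂ^g → ℂ be a linear form with l(U) = 1 and l(λ) = 1. Set b = −4πi(U,m) and define, on the set where θ ≠ 0, ξ₁(z) = −∂_Uθ(z)/θ(z) + (b/2)·l(z). Then: (i) 2∂_Uξ₁(z) = u(z) + b, where u(z) = −2∂_U(∂_Uθ/θ)(z); and (ii) ξ₁(z+λ) = ξ₁(z) whenever θ(z) ≠ 0. -/

import Mathlib

open Set

/-- The general term of the theta series. -/
noncomputable def thetaTerm {g : ℕ} (B : Matrix (Fin g) (Fin g) ℂ)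
    (m : Fin g → ℤ) (z : Fin g → ℂ) : ℂ :=
  Complex.exp (2 * (Real.pi : ℂ) * Complex.I * (∑ i, (m i : ℂ) * z i)
    + (Real.pi : ℂ) * Complex.I * ∑ i, ∑ j, B i j * (m i : ℂ) * (m j : ℂ))

/-- The Riemann theta function `θ(z) = ∑_{m ∈ ℤ^g} exp(2πi(z,m) + πi(Bm,m))`. -/
noncomputable def riemannTheta {g : ℕ} (B : Matrix (Fin g) (Fin g) ℂ)
    (z : Fin g → ℂ) : ℂ :=
  ∑' m : Fin g → ℤ, thetaTerm B m z


open Complex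

section Helpers

variable {g : ℕ}

/-- The continuous linear form `z ↦ 2πi ∑ m i * z i`. -/
noncomputable def thetaCLM (m : Fin g → ℤ) : (Fin g → ℂ) →L[ℂ] ℂ :=
  (2 * (Real.pi : ℂ) * Complex.I) •
    ∑ i, (m i : ℂ) • (ContinuousLinearMap.proj i : (Fin g → ℂ) →L[ℂ] ℂ)

lemma thetaCLM_apply (m : Fin g → ℤ) (z : Fin g → ℂ) :
    thetaCLM m z = 2 * (Real.pi : ℂ) * Complex.I * ∑ i, (m i : ℂ) * z i := by
  simp [thetaCLM, ContinuousLinearMap.sum_apply]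

lemma hasFDerivAt_thetaTerm (B : Matrix (Fin g) (Fin g) ℂ) (m : Fin g → ℤ)
    (z : Fin g → ℂ) :
    HasFDerivAt (thetaTerm B m) (thetaTerm B m z • thetaCLM m) z := by
  have h1 : HasFDerivAt
      (fun w => thetaCLM m w + (Real.pi : ℂ) * Complex.I * ∑ i, ∑ j, B i j * (m i : ℂ) * (m j : ℂ))
      (thetaCLM m) z := ((thetaCLM m).hasFDerivAt).add_const _
  have h2 := h1.cexp
  have he : thetaTerm B m = fun w =>
      Complex.exp (thetaCLM m w + (Real.pi : ℂ) * Complex.I * ∑ i, ∑ j, B i j * (m i : ℂ) * (m j : ℂ)) := by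
    funext w; simp only [thetaTerm, thetaCLM_apply]
  rw [he]
  convert h2 using 2

lemma norm_thetaCLM_le (m : Fin g → ℤ) :
    ‖thetaCLM m‖ ≤ 2 * Real.pi * ∑ i, |(m i : ℝ)| := by
  apply ContinuousLinearMap.opNorm_le_bound
  · positivity
  · intro z
    rw [thetaCLM_apply]
    calc ‖2 * (Real.pi : ℂ) * Complex.I * ∑ i, (m i : ℂ) * z i‖
        = 2 * Real.pi * ‖∑ i, (m i : ℂ) * z i‖ := by
          simp [norm_mul, Real.pi_nonneg, abs_of_nonneg]
      _ ≤ 2 * Real.pi * ∑ i, |(m i : ℝ)| * ‖z‖ := by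
          gcongr
          refine (norm_sum_le _ _).trans ?_
          apply Finset.sum_le_sum
          intro i _
          rw [norm_mul]
          have h1 : ‖((m i : ℂ))‖ = |(m i : ℝ)| := by
            rw [show ((m i : ℂ)) = (((m i : ℝ) : ℂ)) by push_cast; ring, Complex.norm_real,
              Real.norm_eq_abs]
          rw [h1]
          gcongr
          exact norm_le_pi_norm z i
      _ = 2 * Real.pi * ∑ i, |(m i : ℝ)| * ‖z‖ := rfl
      _ ≤ (2 * Real.pi * ∑ i, |(m i : ℝ)|) * ‖z‖ := by
          rw [← Finset.sum_mul]; ring_nf; exact le_refl _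

end Helpers


section Summability

variable {g : ℕ}

lemma summable_pi_prod {f : ℤ → ℝ} (hf : Summable f) (hf0 : ∀ k, 0 ≤ f k) (g : ℕ) :
    Summable (fun m : Fin g → ℤ => ∏ i, f (m i)) := by
  induction g with
  | zero => exact .of_finite
  | succ g ih =>
    have h := hf.mul_of_nonneg ih hf0
      (fun m => Finset.prod_nonneg (fun i _ => hf0 _))
    set e := Fin.consEquiv (fun _ : Fin (g + 1) => ℤ) with he
    refine (Equiv.summable_iff e).1 ?_
    have : ((fun m : Fin (g+1) → ℤ => ∏ i, f (m i)) ∘ e)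
        = fun p : ℤ × (Fin g → ℤ) => f p.1 * ∏ i, f (p.2 i) := by
      funext p
      simp only [Function.comp_apply, he, Fin.consEquiv_apply]
      rw [Fin.prod_univ_succ]
      simp
    rw [this]
    exact h

lemma summable_int_exp (a c : ℝ) (hc : 0 < c) :
    Summable (fun k : ℤ => Real.exp (a * |(k : ℝ)| - c * (k : ℝ) ^ 2)) := by
  have hn : Summable (fun n : ℕ => Real.exp (-(n : ℝ))) := Real.summable_exp_neg_nat
  have hz : Summable (fun k : ℤ => Real.exp (-|(k : ℝ)|)) := by
    apply Summable.of_nat_of_neg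
    · simpa using hn
    · simpa using hn
  have key : ∀ k : ℤ, Real.exp (a * |(k : ℝ)| - c * (k : ℝ) ^ 2)
      ≤ Real.exp ((a + 1) ^ 2 / (4 * c)) * Real.exp (-|(k : ℝ)|) := by
    intro k
    rw [← Real.exp_add]
    apply Real.exp_le_exp.2
    set t := |(k : ℝ)| with ht
    have hk2 : ((k : ℝ)) ^ 2 = t ^ 2 := (_root_.sq_abs _).symm
    rw [hk2, ← sub_nonneg]
    have expand : (a + 1) ^ 2 / (4 * c) + -t - (a * t - c * t ^ 2)
        = (2 * c * t - (a + 1)) ^ 2 / (4 * c) := by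
      field_simp
      ring
    rw [expand]
    positivity
  exact Summable.of_nonneg_of_le (fun k => (Real.exp_pos _).le) key (hz.mul_left _)

lemma summable_prod_exp (g : ℕ) (a c : ℝ) (hc : 0 < c) :
    Summable (fun m : Fin g → ℤ => ∏ i, Real.exp (a * |(m i : ℝ)| - c * (m i : ℝ) ^ 2)) :=
  summable_pi_prod (summable_int_exp a c hc) (fun _ => (Real.exp_pos _).le) g

lemma prod_exp_nonneg (m : Fin g → ℤ) (a c : ℝ) :
    0 ≤ ∏ i, Real.exp (a * |(m i : ℝ)| - c * (m i : ℝ) ^ 2) :=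
  Finset.prod_nonneg fun _ _ => (Real.exp_pos _).le

/-- Absorb a linear factor `∑ |mᵢ|` into the exponentials. -/
lemma sum_abs_mul_prod_exp_le (m : Fin g → ℤ) (a c : ℝ) :
    (∑ i, |(m i : ℝ)|) * ∏ i, Real.exp (a * |(m i : ℝ)| - c * (m i : ℝ) ^ 2)
      ≤ ∏ i, Real.exp ((a + 1) * |(m i : ℝ)| - c * (m i : ℝ) ^ 2) := by
  have h1 : (∑ i, |(m i : ℝ)|) ≤ ∏ i, Real.exp |(m i : ℝ)| := by
    rw [← Real.exp_sum]
    have h0 : (0:ℝ) ≤ ∑ i, |(m i : ℝ)| :=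
      Finset.sum_nonneg (fun i _ => abs_nonneg _)
    linarith [Real.add_one_le_exp (∑ i, |(m i : ℝ)|)]
  calc (∑ i, |(m i : ℝ)|) * ∏ i, Real.exp (a * |(m i : ℝ)| - c * (m i : ℝ) ^ 2)
      ≤ (∏ i, Real.exp |(m i : ℝ)|) * ∏ i, Real.exp (a * |(m i : ℝ)| - c * (m i : ℝ) ^ 2) := by
        apply mul_le_mul_of_nonneg_right h1 (prod_exp_nonneg m a c)
    _ = ∏ i, Real.exp ((a + 1) * |(m i : ℝ)| - c * (m i : ℝ) ^ 2) := by
        rw [← Finset.prod_mul_distrib]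
        apply Finset.prod_congr rfl
        intro i _
        rw [← Real.exp_add]
        ring_nf

end Summability


section PosDef

variable {g : ℕ}

lemma exists_quadratic_lower_bound (B : Matrix (Fin g) (Fin g) ℂ)
    (hpos : ∀ v : Fin g → ℝ, v ≠ 0 → 0 < ∑ i, ∑ j, (B i j).im * v i * v j) :
    ∃ ε > 0, ∀ v : Fin g → ℝ,
      ε * ∑ i, v i ^ 2 ≤ ∑ i, ∑ j, (B i j).im * v i * v j := by
  set Q : (Fin g → ℝ) → ℝ := fun v => ∑ i, ∑ j, (B i j).im * v i * v j with hQ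
  have hQc : Continuous Q := by
    apply continuous_finset_sum
    intro i _
    apply continuous_finset_sum
    intro j _
    exact (continuous_const.mul (continuous_apply i)).mul (continuous_apply j)
  have hQsmul : ∀ (c : ℝ) (v : Fin g → ℝ), Q (c • v) = c ^ 2 * Q v := by
    intro c v
    simp only [hQ, Finset.mul_sum]
    refine Finset.sum_congr rfl fun i _ => Finset.sum_congr rfl fun j _ => ?_
    simp only [Pi.smul_apply, smul_eq_mul]
    ring
  rcases Nat.eq_zero_or_pos g with hg | hg
  · refine ⟨1, one_pos, fun v => ?_⟩
    subst hg
    simp [hQ]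
  · set K : Set (Fin g → ℝ) := {v | ∑ i, v i ^ 2 = 1} with hK
    have hKclosed : IsClosed K := by
      apply isClosed_eq
      · exact continuous_finset_sum _ fun i _ => (continuous_apply i).pow 2
      · exact continuous_const
    have hKsub : K ⊆ Metric.closedBall 0 1 := by
      intro v hv
      simp only [Metric.mem_closedBall, dist_zero_right]
      rw [pi_norm_le_iff_of_nonneg zero_le_one]
      intro i
      rw [Real.norm_eq_abs, ← sq_le_one_iff_abs_le_one]
      have hle : v i ^ 2 ≤ ∑ j, v j ^ 2 :=
        Finset.single_le_sum (fun j _ => sq_nonneg (v j)) (Finset.mem_univ i)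
      have : ∑ j, v j ^ 2 = 1 := hv
      linarith
    have hKcomp : IsCompact K :=
      (isCompact_closedBall (0 : Fin g → ℝ) 1).of_isClosed_subset hKclosed hKsub
    have hKne : K.Nonempty := by
      set v0 : Fin g → ℝ := Pi.single ⟨0, hg⟩ (1:ℝ) with hv0
      refine ⟨v0, ?_⟩
      have : ∀ i : Fin g, v0 i ^ 2 = if i = ⟨0, hg⟩ then 1 else 0 := by
        intro i
        rcases eq_or_ne i ⟨0, hg⟩ with h | h <;> simp [hv0, Pi.single_apply, h]
      show ∑ i, v0 i ^ 2 = 1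
      rw [Finset.sum_congr rfl (fun i _ => this i), Finset.sum_ite_eq' Finset.univ]
      simp
    obtain ⟨w, hwK, hwmin⟩ := hKcomp.exists_isMinOn hKne hQc.continuousOn
    have hw0 : w ≠ 0 := by
      intro h
      have hwK' : ∑ i, w i ^ 2 = 1 := hwK
      rw [h] at hwK'
      simp at hwK'
    refine ⟨Q w, hpos w hw0, fun v => ?_⟩
    by_cases hv : v = 0
    · subst hv
      simp [hQ]
    · have hsum : 0 < ∑ i, v i ^ 2 := by
        obtain ⟨i0, hi0⟩ := Function.ne_iff.1 hv
        exact Finset.sum_pos' (fun i _ => sq_nonneg _)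
          ⟨i0, Finset.mem_univ _, (sq_nonneg _).lt_of_ne (Ne.symm (pow_ne_zero 2 hi0))⟩
      set r := Real.sqrt (∑ i, v i ^ 2) with hr
      have hrpos : 0 < r := Real.sqrt_pos.2 hsum
      have hr2 : r ^ 2 = ∑ i, v i ^ 2 := Real.sq_sqrt hsum.le
      have hmem : r⁻¹ • v ∈ K := by
        show ∑ i, (r⁻¹ • v) i ^ 2 = 1
        have : ∀ i : Fin g, (r⁻¹ • v) i ^ 2 = r⁻¹ ^ 2 * v i ^ 2 := by
          intro i
          simp [Pi.smul_apply, smul_eq_mul, mul_pow]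
        rw [Finset.sum_congr rfl (fun i _ => this i), ← Finset.mul_sum, ← hr2]
        field_simp
      have hle := isMinOn_iff.1 hwmin _ hmem
      rw [hQsmul] at hle
      have h2 := mul_le_mul_of_nonneg_right hle (sq_nonneg r)
      calc Q w * ∑ i, v i ^ 2 = Q w * r ^ 2 := by rw [hr2]
        _ ≤ (r⁻¹ ^ 2 * Q v) * r ^ 2 := h2
        _ = Q v := by field_simp
end PosDef


section TermBound

variable {g : ℕ}

lemma norm_thetaTerm_le (B : Matrix (Fin g) (Fin g) ℂ) {ε : ℝ}
    (hB : ∀ v : Fin g → ℝ, ε * ∑ i, v i ^ 2 ≤ ∑ i, ∑ j, (B i j).im * v i * v j)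
    (m : Fin g → ℤ) {R : ℝ} {w : Fin g → ℂ} (hw : ‖w‖ ≤ R) :
    ‖thetaTerm B m w‖
      ≤ ∏ i, Real.exp (2 * Real.pi * R * |(m i : ℝ)| - Real.pi * ε * (m i : ℝ) ^ 2) := by
  have hR : 0 ≤ R := le_trans (norm_nonneg w) hw
  rw [thetaTerm, Complex.norm_exp, ← Real.exp_sum]
  apply Real.exp_le_exp.2
  set S1 : ℂ := ∑ i, (m i : ℂ) * w i with hS1def
  set S2 : ℂ := ∑ i, ∑ j, B i j * (m i : ℂ) * (m j : ℂ) with hS2def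
  have hre : (2 * (Real.pi : ℂ) * Complex.I * S1 + (Real.pi : ℂ) * Complex.I * S2).re
      = -(2 * Real.pi * S1.im) - Real.pi * S2.im := by
    simp [Complex.add_re, Complex.mul_re, Complex.mul_im]
    ring
  rw [hre]
  have hS1 : S1.im = ∑ i, (m i : ℝ) * (w i).im := by
    rw [hS1def, Complex.im_sum]
    refine Finset.sum_congr rfl fun i _ => ?_
    simp [Complex.mul_im]
  have hS2 : S2.im = ∑ i, ∑ j, (B i j).im * (m i : ℝ) * (m j : ℝ) := by
    rw [hS2def, Complex.im_sum]
    refine Finset.sum_congr rfl fun i _ => ?_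
    rw [Complex.im_sum]
    refine Finset.sum_congr rfl fun j _ => ?_
    simp [Complex.mul_im, Complex.mul_re]
  have ha : -(2 * Real.pi * S1.im) ≤ ∑ i, 2 * Real.pi * R * |(m i : ℝ)| := by
    rw [hS1, Finset.mul_sum, ← Finset.sum_neg_distrib]
    apply Finset.sum_le_sum
    intro i _
    have h1 : |(w i).im| ≤ R := by
      refine le_trans (Complex.abs_im_le_norm (w i)) (le_trans ?_ hw)
      exact norm_le_pi_norm w i
    have h2 : -((m i : ℝ) * (w i).im) ≤ |(m i : ℝ)| * R := by
      calc -((m i : ℝ) * (w i).im) ≤ |(m i : ℝ) * (w i).im| := neg_le_abs _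
        _ = |(m i : ℝ)| * |(w i).im| := abs_mul _ _
        _ ≤ |(m i : ℝ)| * R := by gcongr
    calc -(2 * Real.pi * ((m i : ℝ) * (w i).im))
        = 2 * Real.pi * -((m i : ℝ) * (w i).im) := by ring
      _ ≤ 2 * Real.pi * (|(m i : ℝ)| * R) := by
          apply mul_le_mul_of_nonneg_left h2 (by positivity)
      _ = 2 * Real.pi * R * |(m i : ℝ)| := by ring
  have hb : -(Real.pi * S2.im) ≤ -(Real.pi * (ε * ∑ i, (m i : ℝ) ^ 2)) := by
    apply neg_le_neg
    apply mul_le_mul_of_nonneg_left _ Real.pi_nonneg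
    rw [hS2]
    exact hB (fun i => (m i : ℝ))
  calc -(2 * Real.pi * S1.im) - Real.pi * S2.im
      ≤ (∑ i, 2 * Real.pi * R * |(m i : ℝ)|) - Real.pi * (ε * ∑ i, (m i : ℝ) ^ 2) := by
        have := add_le_add ha hb
        linarith
    _ = ∑ i, (2 * Real.pi * R * |(m i : ℝ)| - Real.pi * ε * (m i : ℝ) ^ 2) := by
        rw [Finset.sum_sub_distrib, Finset.mul_sum]
        congr 1
        rw [Finset.mul_sum]
        refine Finset.sum_congr rfl fun i _ => by ring

end TermBound


section Shift

variable {g : ℕ}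

lemma thetaTerm_shift (B : Matrix (Fin g) (Fin g) ℂ) (hsym : B.IsSymm)
    (n m k : Fin g → ℤ) (lam : Fin g → ℂ)
    (hlam : lam = fun i => (n i : ℂ) + ∑ j, B i j * (m j : ℂ)) (w : Fin g → ℂ) :
    thetaTerm B (k + m) w
      = Complex.exp (thetaCLM m w
          + (Real.pi : ℂ) * Complex.I * ∑ i, ∑ j, B i j * (m i : ℂ) * (m j : ℂ))
        * thetaTerm B k (w + lam) := by
  set Skk := ∑ i, ∑ j, B i j * (k i : ℂ) * (k j : ℂ) with hSkk
  set Skm := ∑ i, ∑ j, B i j * (k i : ℂ) * (m j : ℂ) with hSkm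
  set Smm := ∑ i, ∑ j, B i j * (m i : ℂ) * (m j : ℂ) with hSmm
  set Lkw := ∑ i, (k i : ℂ) * w i with hLkw
  set Lmw := ∑ i, (m i : ℂ) * w i with hLmw
  set Lkn := ∑ i, (k i : ℂ) * (n i : ℂ) with hLkn
  have h1 : ∑ i, ((k + m) i : ℂ) * w i = Lkw + Lmw := by
    rw [hLkw, hLmw, ← Finset.sum_add_distrib]
    refine Finset.sum_congr rfl fun i _ => ?_
    push_cast [Pi.add_apply]
    ring
  have hswap : (∑ i, ∑ j, B i j * (m i : ℂ) * (k j : ℂ)) = Skm := by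
    rw [hSkm, Finset.sum_comm]
    refine Finset.sum_congr rfl fun i _ => Finset.sum_congr rfl fun j _ => ?_
    linear_combination ((m j : ℂ) * (k i : ℂ)) * hsym.apply i j
  have h2 : ∑ i, ∑ j, B i j * ((k + m) i : ℂ) * ((k + m) j : ℂ) = Skk + Skm + Skm + Smm := by
    calc ∑ i, ∑ j, B i j * ((k + m) i : ℂ) * ((k + m) j : ℂ)
        = ∑ i, ∑ j, (B i j * (k i : ℂ) * (k j : ℂ) + B i j * (k i : ℂ) * (m j : ℂ)
            + B i j * (m i : ℂ) * (k j : ℂ) + B i j * (m i : ℂ) * (m j : ℂ)) := by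
          refine Finset.sum_congr rfl fun i _ => Finset.sum_congr rfl fun j _ => ?_
          push_cast [Pi.add_apply]
          ring
      _ = Skk + Skm + (∑ i, ∑ j, B i j * (m i : ℂ) * (k j : ℂ)) + Smm := by
          simp only [Finset.sum_add_distrib]
          rfl
      _ = Skk + Skm + Skm + Smm := by rw [hswap]
  have h3 : ∑ i, (k i : ℂ) * (w + lam) i = Lkw + Lkn + Skm := by
    rw [hlam]
    have : ∀ i : Fin g, (k i : ℂ) * (w + fun i => (n i : ℂ) + ∑ j, B i j * (m j : ℂ)) i
        = (k i : ℂ) * w i + (k i : ℂ) * (n i : ℂ) + ∑ j, B i j * (k i : ℂ) * (m j : ℂ) := by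
      intro i
      simp only [Pi.add_apply, mul_add, Finset.mul_sum]
      rw [← add_assoc]
      congr 1
      exact Finset.sum_congr rfl fun j _ => by ring
    rw [Finset.sum_congr rfl fun i _ => this i]
    simp only [Finset.sum_add_distrib]
    rfl
  have hone : Complex.exp (2 * (Real.pi : ℂ) * Complex.I * Lkn) = 1 := by
    have hc : Lkn = ((∑ i, k i * n i : ℤ) : ℂ) := by
      rw [hLkn]
      push_cast
      rfl
    rw [hc, show 2 * (Real.pi : ℂ) * Complex.I * ((∑ i, k i * n i : ℤ) : ℂ)
      = ((∑ i, k i * n i : ℤ) : ℂ) * (2 * (Real.pi : ℂ) * Complex.I) by ring]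
    exact Complex.exp_int_mul_two_pi_mul_I _
  rw [thetaTerm, thetaTerm, thetaCLM_apply, ← Complex.exp_add, h1, h2, h3]
  rw [show 2 * (Real.pi : ℂ) * Complex.I * (Lkw + Lmw)
        + (Real.pi : ℂ) * Complex.I * (Skk + Skm + Skm + Smm)
      = (2 * (Real.pi : ℂ) * Complex.I * Lmw + (Real.pi : ℂ) * Complex.I * Smm
        + (2 * (Real.pi : ℂ) * Complex.I * (Lkw + Lkn + Skm)
          + (Real.pi : ℂ) * Complex.I * Skk))
        - 2 * (Real.pi : ℂ) * Complex.I * Lkn by ring]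
  rw [Complex.exp_sub, hone, div_one]

lemma riemannTheta_shift (B : Matrix (Fin g) (Fin g) ℂ) (hsym : B.IsSymm)
    (n m : Fin g → ℤ) (lam : Fin g → ℂ)
    (hlam : lam = fun i => (n i : ℂ) + ∑ j, B i j * (m j : ℂ)) (w : Fin g → ℂ) :
    riemannTheta B w
      = Complex.exp (thetaCLM m w
          + (Real.pi : ℂ) * Complex.I * ∑ i, ∑ j, B i j * (m i : ℂ) * (m j : ℂ))
        * riemannTheta B (w + lam) := by
  have h := Equiv.tsum_eq (Equiv.addRight m) (fun k => thetaTerm B k w)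
  simp only [Equiv.coe_addRight] at h
  calc riemannTheta B w = ∑' k, thetaTerm B (k + m) w := h.symm
    _ = ∑' k, Complex.exp (thetaCLM m w
          + (Real.pi : ℂ) * Complex.I * ∑ i, ∑ j, B i j * (m i : ℂ) * (m j : ℂ))
        * thetaTerm B k (w + lam) :=
      tsum_congr fun k => thetaTerm_shift B hsym n m k lam hlam w
    _ = _ := tsum_mul_left

end Shift

/-- with `λ = n + Bm`, `l` a linear form with `l(U) = 1`, `l(λ) = 1`,
`b = −4πi(U,m)` and `ξ₁(z) = −∂_Uθ(z)/θ(z) + (b/2)·l(z)`, one has, wherever `θ ≠ 0`: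
(i) `2∂_Uξ₁ = u + b` where `u = −2∂_U(∂_Uθ/θ)`; and (ii) `ξ₁(z+λ) = ξ₁(z)`. -/
theorem first_wave_coefficient_periodic
    (g : ℕ) (B : Matrix (Fin g) (Fin g) ℂ) (hsym : B.IsSymm)
    (hpos : ∀ v : Fin g → ℝ, v ≠ 0 → 0 < ∑ i, ∑ j, (B i j).im * v i * v j)
    (U : Fin g → ℂ) (n m : Fin g → ℤ) (lam : Fin g → ℂ)
    (hlam : lam = fun i => (n i : ℂ) + ∑ j, B i j * (m j : ℂ))
    (l : (Fin g → ℂ) →ₗ[ℂ] ℂ) (hlU : l U = 1) (hllam : l lam = 1)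
    (b : ℂ) (hb : b = -(4 * (Real.pi : ℂ) * Complex.I) * ∑ i, U i * (m i : ℂ))
    (ξ₁ : (Fin g → ℂ) → ℂ)
    (hξ₁ : ξ₁ = fun z =>
      -(fderiv ℂ (riemannTheta B) z U / riemannTheta B z) + b / 2 * l z) :
    ∀ z : Fin g → ℂ, riemannTheta B z ≠ 0 →
      (2 * fderiv ℂ ξ₁ z U =
        -2 * fderiv ℂ (fun w => fderiv ℂ (riemannTheta B) w U / riemannTheta B w) z U + b) ∧
      ξ₁ (z + lam) = ξ₁ z := by
  intro z hz
  obtain ⟨ε, hε, hB⟩ := exists_quadratic_lower_bound B hpos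
  have hπε : (0 : ℝ) < Real.pi * ε := by positivity
  set R : ℝ := ‖z‖ + ‖lam‖ + 1 with hR
  have hRpos : 0 < R := by rw [hR]; positivity
  set s : Set (Fin g → ℂ) := Metric.ball 0 R with hs
  have hopen : IsOpen s := Metric.isOpen_ball
  have hconn : IsPreconnected s := (convex_ball (0 : Fin g → ℂ) R).isPreconnected
  have hzs : z ∈ s := by
    simp only [hs, Metric.mem_ball, dist_zero_right, hR]
    have h1 : (0 : ℝ) ≤ ‖lam‖ := norm_nonneg _
    linarith
  have hzlam : z + lam ∈ s := by
    simp only [hs, Metric.mem_ball, dist_zero_right, hR]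
    calc ‖z + lam‖ ≤ ‖z‖ + ‖lam‖ := norm_add_le _ _
      _ < ‖z‖ + ‖lam‖ + 1 := by linarith
  have h0s : (0 : Fin g → ℂ) ∈ s := Metric.mem_ball_self hRpos
  have hws : ∀ w ∈ s, ‖w‖ ≤ R := by
    intro w hw
    rw [hs, Metric.mem_ball, dist_zero_right] at hw
    exact hw.le
  have hns : ∀ (c : ℂ) (L : (Fin g → ℂ) →L[ℂ] ℂ), ‖c • L‖ = ‖c‖ * ‖L‖ :=
    fun c L => by exact norm_smul c L
  set P : ℝ → (Fin g → ℤ) → ℝ :=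
    fun a m' => ∏ i, Real.exp (a * |(m' i : ℝ)| - Real.pi * ε * (m' i : ℝ) ^ 2) with hP
  have hPsum : ∀ a, Summable (P a) := fun a => summable_prod_exp g a _ hπε
  have hPnonneg : ∀ a m', 0 ≤ P a m' := fun a m' => prod_exp_nonneg m' a _
  have hterm_le : ∀ (m' : Fin g → ℤ) (w : Fin g → ℂ), w ∈ s →
      ‖thetaTerm B m' w‖ ≤ P (2 * Real.pi * R) m' :=
    fun m' w hw => norm_thetaTerm_le B hB m' (hws w hw)
  have hSN : ∀ m' : Fin g → ℤ, (0 : ℝ) ≤ ∑ i, |(m' i : ℝ)| :=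
    fun m' => Finset.sum_nonneg fun i _ => abs_nonneg _
  have habs : ∀ (m' : Fin g → ℤ) (a : ℝ),
      (∑ i, |(m' i : ℝ)|) * P a m' ≤ P (a + 1) m' :=
    fun m' a => sum_abs_mul_prod_exp_le m' a _
  have hbound1 : ∀ (m' : Fin g → ℤ) (w : Fin g → ℂ), w ∈ s →
      ‖thetaTerm B m' w • thetaCLM m'‖ ≤ 2 * Real.pi * P (2 * Real.pi * R + 1) m' := by
    intro m' w hw
    rw [hns]
    calc ‖thetaTerm B m' w‖ * ‖thetaCLM m'‖
        ≤ P (2 * Real.pi * R) m' * (2 * Real.pi * ∑ i, |(m' i : ℝ)|) :=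
          mul_le_mul (hterm_le m' w hw) (norm_thetaCLM_le m') (norm_nonneg _) (hPnonneg _ _)
      _ = 2 * Real.pi * ((∑ i, |(m' i : ℝ)|) * P (2 * Real.pi * R) m') := by ring
      _ ≤ 2 * Real.pi * P (2 * Real.pi * R + 1) m' :=
          mul_le_mul_of_nonneg_left (habs m' _) (by positivity)
  have hCLMU : ∀ m' : Fin g → ℤ,
      ‖thetaCLM m' U‖ ≤ 2 * Real.pi * (∑ i, |(m' i : ℝ)|) * ‖U‖ :=
    fun m' => le_trans ((thetaCLM m').le_opNorm U)
      (mul_le_mul_of_nonneg_right (norm_thetaCLM_le m') (norm_nonneg _))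
  have hbound2 : ∀ (m' : Fin g → ℤ) (w : Fin g → ℂ), w ∈ s →
      ‖(thetaCLM m' U * thetaTerm B m' w) • thetaCLM m'‖
        ≤ 2 * Real.pi * (2 * Real.pi) * ‖U‖ * P (2 * Real.pi * R + 1 + 1) m' := by
    intro m' w hw
    have hUc : (0 : ℝ) ≤ 2 * Real.pi * (∑ i, |(m' i : ℝ)|) * ‖U‖ :=
      mul_nonneg (mul_nonneg (by positivity) (hSN m')) (norm_nonneg _)
    rw [hns, norm_mul]
    calc ‖thetaCLM m' U‖ * ‖thetaTerm B m' w‖ * ‖thetaCLM m'‖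
        ≤ (2 * Real.pi * (∑ i, |(m' i : ℝ)|) * ‖U‖) * P (2 * Real.pi * R) m'
            * (2 * Real.pi * ∑ i, |(m' i : ℝ)|) :=
          mul_le_mul
            (mul_le_mul (hCLMU m') (hterm_le m' w hw) (norm_nonneg _) hUc)
            (norm_thetaCLM_le m') (norm_nonneg _)
            (mul_nonneg hUc (hPnonneg _ _))
      _ = 2 * Real.pi * (2 * Real.pi) * ‖U‖
            * ((∑ i, |(m' i : ℝ)|) * ((∑ i, |(m' i : ℝ)|) * P (2 * Real.pi * R) m')) := by
          ring
      _ ≤ 2 * Real.pi * (2 * Real.pi) * ‖U‖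
            * ((∑ i, |(m' i : ℝ)|) * P (2 * Real.pi * R + 1) m') := by
          apply mul_le_mul_of_nonneg_left _ (by positivity)
          exact mul_le_mul_of_nonneg_left (habs m' _) (hSN m')
      _ ≤ 2 * Real.pi * (2 * Real.pi) * ‖U‖ * P (2 * Real.pi * R + 1 + 1) m' :=
          mul_le_mul_of_nonneg_left (habs m' _) (by positivity)
  have hu₁ : Summable (fun m' : Fin g → ℤ => 2 * Real.pi * P (2 * Real.pi * R + 1) m') :=
    (hPsum _).mul_left _
  have hu₂ : Summable (fun m' : Fin g → ℤ =>
      2 * Real.pi * (2 * Real.pi) * ‖U‖ * P (2 * Real.pi * R + 1 + 1) m') :=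
    (hPsum _).mul_left _
  have hsum0 : Summable (fun m' : Fin g → ℤ => thetaTerm B m' 0) :=
    Summable.of_norm (Summable.of_nonneg_of_le (fun _ => norm_nonneg _)
      (fun m' => hterm_le m' 0 h0s) (hPsum _))
  have hsum20 : Summable (fun m' : Fin g → ℤ => thetaCLM m' U * thetaTerm B m' 0) := by
    apply Summable.of_norm
    apply Summable.of_nonneg_of_le (fun _ => norm_nonneg _)
      (fun m' => ?_) ((hPsum (2 * Real.pi * R + 1)).mul_left (2 * Real.pi * ‖U‖))
    rw [norm_mul]
    calc ‖thetaCLM m' U‖ * ‖thetaTerm B m' 0‖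
        ≤ (2 * Real.pi * (∑ i, |(m' i : ℝ)|) * ‖U‖) * P (2 * Real.pi * R) m' :=
          mul_le_mul (hCLMU m') (hterm_le m' 0 h0s) (norm_nonneg _)
            (mul_nonneg (mul_nonneg (by positivity) (hSN m')) (norm_nonneg _))
      _ = 2 * Real.pi * ‖U‖ * ((∑ i, |(m' i : ℝ)|) * P (2 * Real.pi * R) m') := by ring
      _ ≤ 2 * Real.pi * ‖U‖ * P (2 * Real.pi * R + 1) m' :=
          mul_le_mul_of_nonneg_left (habs m' _) (by positivity)
  -- Step A : differentiability of θ on the ball, with explicit derivative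
  have hA : ∀ w ∈ s, HasFDerivAt (riemannTheta B)
      (∑' m' : Fin g → ℤ, thetaTerm B m' w • thetaCLM m') w := by
    intro w hw
    exact hasFDerivAt_tsum_of_isPreconnected hu₁ hopen hconn
      (fun m' x _ => hasFDerivAt_thetaTerm B m' x)
      (fun m' x hx => hbound1 m' x hx) h0s hsum0 hw
  have hsumCLM : ∀ w ∈ s, Summable (fun m' : Fin g → ℤ => thetaTerm B m' w • thetaCLM m') :=
    fun w hw => Summable.of_norm (Summable.of_nonneg_of_le (fun _ => norm_nonneg _)
      (fun m' => hbound1 m' w hw) hu₁)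
  -- Step B : the function w ↦ ∂_U θ (w) as a tsum
  set F : (Fin g → ℂ) → ℂ := fun w => ∑' m' : Fin g → ℤ, thetaCLM m' U * thetaTerm B m' w
    with hFdef
  have hFeq : ∀ w ∈ s, fderiv ℂ (riemannTheta B) w U = F w := by
    intro w hw
    rw [(hA w hw).fderiv]
    have hmap := (ContinuousLinearMap.apply ℂ ℂ U).map_tsum (hsumCLM w hw)
    simp only [ContinuousLinearMap.apply_apply] at hmap
    rw [hmap, hFdef]
    exact tsum_congr fun m' => by
      rw [ContinuousLinearMap.smul_apply, smul_eq_mul, mul_comm]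
  -- Step C : differentiability of F
  have hC : ∀ w ∈ s, HasFDerivAt F
      (∑' m' : Fin g → ℤ, (thetaCLM m' U * thetaTerm B m' w) • thetaCLM m') w := by
    intro w hw
    refine hasFDerivAt_tsum_of_isPreconnected hu₂ hopen hconn
      (fun m' x _ => ?_) (fun m' x hx => hbound2 m' x hx) h0s hsum20 hw
    simpa [smul_smul] using (hasFDerivAt_thetaTerm B m' x).const_mul (thetaCLM m' U)
  have hθd : DifferentiableAt ℂ (riemannTheta B) z := (hA z hzs).differentiableAt
  have hnum : DifferentiableAt ℂ (fun w => fderiv ℂ (riemannTheta B) w U) z := by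
    apply DifferentiableAt.congr_of_eventuallyEq (hC z hzs).differentiableAt
    filter_upwards [hopen.mem_nhds hzs] with w hw using hFeq w hw
  have hq : DifferentiableAt ℂ
      (fun w => fderiv ℂ (riemannTheta B) w U / riemannTheta B w) z := by
    have h := hnum.mul (hθd.inv hz)
    exact h
  have hlCU : (LinearMap.toContinuousLinearMap l) U = l U :=
    congrFun (LinearMap.coe_toContinuousLinearMap' l) U
  have h2 : HasFDerivAt (fun w => b / 2 * l w)
      ((b / 2) • LinearMap.toContinuousLinearMap l) z := by
    have h := ((LinearMap.toContinuousLinearMap l).hasFDerivAt (x := z)).const_mul (b / 2)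
    simpa [LinearMap.coe_toContinuousLinearMap'] using h
  have hξd : HasFDerivAt ξ₁
      (-(fderiv ℂ (fun w => fderiv ℂ (riemannTheta B) w U / riemannTheta B w) z)
        + (b / 2) • LinearMap.toContinuousLinearMap l) z := by
    rw [hξ₁]
    exact (hq.hasFDerivAt.neg).add h2
  constructor
  · -- part (i)
    rw [hξd.fderiv]
    simp only [ContinuousLinearMap.add_apply, ContinuousLinearMap.neg_apply,
      ContinuousLinearMap.smul_apply, smul_eq_mul]
    rw [hlCU, hlU]
    ring
  · -- part (ii)
    have hper : ∀ w, riemannTheta B (w + lam)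
        = Complex.exp (-(thetaCLM m w) - (Real.pi : ℂ) * Complex.I
            * ∑ i, ∑ j, B i j * (m i : ℂ) * (m j : ℂ)) * riemannTheta B w := by
      intro w
      rw [riemannTheta_shift B hsym n m lam hlam w, ← mul_assoc, ← Complex.exp_add]
      rw [show -(thetaCLM m w) - (Real.pi : ℂ) * Complex.I
            * (∑ i, ∑ j, B i j * (m i : ℂ) * (m j : ℂ))
          + (thetaCLM m w + (Real.pi : ℂ) * Complex.I
            * ∑ i, ∑ j, B i j * (m i : ℂ) * (m j : ℂ)) = 0 by ring]
      rw [Complex.exp_zero, one_mul]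
    have hA' := hA (z + lam) hzlam
    have htrans : HasFDerivAt (fun w => riemannTheta B (w + lam))
        (∑' m' : Fin g → ℤ, thetaTerm B m' (z + lam) • thetaCLM m') z := by
      have hid : HasFDerivAt (fun w : Fin g → ℂ => w + lam)
          (ContinuousLinearMap.id ℂ (Fin g → ℂ)) z := (hasFDerivAt_id z).add_const lam
      have h := hA'.comp z hid
      simpa [Function.comp_def] using h
    have hprod : HasFDerivAt (fun w => riemannTheta B (w + lam))
        (Complex.exp (-(thetaCLM m z) - (Real.pi : ℂ) * Complex.I
            * ∑ i, ∑ j, B i j * (m i : ℂ) * (m j : ℂ))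
          • (∑' m' : Fin g → ℤ, thetaTerm B m' z • thetaCLM m')
          + riemannTheta B z • (Complex.exp (-(thetaCLM m z) - (Real.pi : ℂ) * Complex.I
            * ∑ i, ∑ j, B i j * (m i : ℂ) * (m j : ℂ)) • -(thetaCLM m))) z := by
      have h1 : HasFDerivAt (fun w : Fin g → ℂ => -(thetaCLM m w) - (Real.pi : ℂ) * Complex.I
          * ∑ i, ∑ j, B i j * (m i : ℂ) * (m j : ℂ)) (-(thetaCLM m)) z :=
        (((thetaCLM m).hasFDerivAt).neg).sub_const _
      have h3 := h1.cexp.mul (hA z hzs)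
      exact h3.congr_of_eventuallyEq (Filter.Eventually.of_forall fun w => hper w)
    have hDeq := htrans.unique hprod
    have hfz : fderiv ℂ (riemannTheta B) z U
        = (∑' m' : Fin g → ℤ, thetaTerm B m' z • thetaCLM m') U := by rw [(hA z hzs).fderiv]
    have hfzl : fderiv ℂ (riemannTheta B) (z + lam) U
        = (∑' m' : Fin g → ℤ, thetaTerm B m' (z + lam) • thetaCLM m') U := by rw [hA'.fderiv]
    have he₀ne : Complex.exp (-(thetaCLM m z) - (Real.pi : ℂ) * Complex.I
        * ∑ i, ∑ j, B i j * (m i : ℂ) * (m j : ℂ)) ≠ 0 := Complex.exp_ne_zero _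
    have hbU : b / 2 = -(thetaCLM m U) := by
      rw [hb, thetaCLM_apply]
      rw [Finset.sum_congr rfl fun i (_ : i ∈ Finset.univ) => mul_comm (U i) ((m i : ℂ))]
      ring
    simp only [hξ₁]
    rw [hfzl, hfz, hper z, hDeq, map_add l, hllam]
    simp only [ContinuousLinearMap.add_apply, ContinuousLinearMap.smul_apply,
      ContinuousLinearMap.neg_apply, smul_eq_mul]
    rw [show b / 2 * (l z + 1) = b / 2 * l z + b / 2 by ring, hbU]
    generalize hA1 : (∑' m' : Fin g → ℤ, thetaTerm B m' z • thetaCLM m') U = A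
    generalize hT1 : riemannTheta B z = T at hz ⊢
    generalize hE1 : Complex.exp (-(thetaCLM m z) - (Real.pi : ℂ) * Complex.I
        * ∑ i, ∑ j, B i j * (m i : ℂ) * (m j : ℂ)) = e at he₀ne ⊢
    generalize hC1 : thetaCLM m U = C
    field_simp
    ring
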